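/- If a language L ⊆ {0,1}* is recognized by a 2NFA of size d, then for every n, R_n(L) ≤ 2^{(d+1)^2}. -/

import Mathlib

/-! ## Basic machinery for nonuniform two-way automata -/

/-- Head directions: left, stay, right. -/
inductive Dir : Type
  | L | S | R
  deriving DecidableEq

instance : Fintype Dir :=
  ⟨{Dir.L, Dir.S, Dir.R}, fun x => by cases x <;> simp⟩

/-- Move a head position (0-based tape square) in a direction. -/
def movePos (p : ℕ) : Dir → ℕ
  | Dir.L => p - 1
  | Dir.S => p
  | Dir.R => p + 1

/-- Read the bit of an input of length `n` at (0-based) position `p`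
(dummy value `false` out of range; well-formed machines never read out of range). -/
def readBit {n : ℕ} (u : Fin n → Bool) (p : ℕ) : Bool :=
  if h : p < n then u ⟨p, h⟩ else false

/-- A nonuniform head-position-dependent two-way deterministic automaton `2DA_n`
with `d` states, for inputs of length `n`.  The input is on (0-based) squares
`0, …, n-1`; the transition function may differ on each square; the head never
leaves the input; the accepting/rejecting states can only be entered when
reading the rightmost square. -/
structure TwoDA (n d : ℕ) where
  start : Fin d
  acc : Fin d
  rej : Fin d
  acc_ne_rej : acc ≠ rej
  δ : ℕ → Fin d → Bool → Fin d × Dir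
  noLeft : ∀ s b, (δ 0 s b).2 ≠ Dir.L
  noRight : ∀ s b, (δ (n - 1) s b).2 ≠ Dir.R
  haltRight : ∀ i s b, i < n → i ≠ n - 1 → (δ i s b).1 ≠ acc ∧ (δ i s b).1 ≠ rej

namespace TwoDA

variable {n d : ℕ}

/-- One computation step on input `u`; configurations are (state, head position),
and halting configurations are absorbing. -/
def step (M : TwoDA n d) (u : Fin n → Bool) (c : Fin d × ℕ) : Fin d × ℕ :=
  if c.1 = M.acc ∨ c.1 = M.rej then c
  else ((M.δ c.2 c.1 (readBit u c.2)).1, movePos c.2 (M.δ c.2 c.1 (readBit u c.2)).2)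

/-- The machine accepts `u` if the run from the initial configuration reaches the
accepting state. -/
def accepts (M : TwoDA n d) (u : Fin n → Bool) : Prop :=
  ∃ t : ℕ, ((M.step u)^[t] (M.start, 0)).1 = M.acc

def rejects (M : TwoDA n d) (u : Fin n → Bool) : Prop :=
  ∃ t : ℕ, ((M.step u)^[t] (M.start, 0)).1 = M.rej

/-- A `2DA_n` computes `f` if it accepts each `u` with `f u = true` and rejects each
`u` with `f u = false`. -/
def Computes (M : TwoDA n d) (f : (Fin n → Bool) → Bool) : Prop :=
  ∀ u, (f u = true → M.accepts u) ∧ (f u = false → M.rejects u)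

/-- A shuffling automaton `2DA^Θ_n` computes `f`: for some permutation `θ`, the `j`-th
input symbol is placed on square `θ(j)` and the `2DA_n` computes the resulting function. -/
def ComputesShuffled (M : TwoDA n d) (f : (Fin n → Bool) → Bool) : Prop :=
  ∃ θ : Equiv.Perm (Fin n), M.Computes (fun v => f (fun j => v (θ j)))

end TwoDA

/-- The nondeterministic counterpart `2NA_n` of `2DA_n`. -/
structure TwoNA (n d : ℕ) where
  start : Fin d
  acc : Fin d
  rej : Fin d
  acc_ne_rej : acc ≠ rej
  δ : ℕ → Fin d → Bool → Set (Fin d × Dir)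
  noLeft : ∀ s b r, r ∈ δ 0 s b → r.2 ≠ Dir.L
  noRight : ∀ s b r, r ∈ δ (n - 1) s b → r.2 ≠ Dir.R
  haltRight : ∀ i s b r, i < n → i ≠ n - 1 → r ∈ δ i s b → r.1 ≠ acc ∧ r.1 ≠ rej

namespace TwoNA

variable {n d : ℕ}

/-- One nondeterministic step. -/
def stepRel (M : TwoNA n d) (u : Fin n → Bool) (c c' : Fin d × ℕ) : Prop :=
  c.1 ≠ M.acc ∧ c.1 ≠ M.rej ∧
    ∃ r ∈ M.δ c.2 c.1 (readBit u c.2), c' = (r.1, movePos c.2 r.2)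

/-- Acceptance: some computation path reaches the accepting state. -/
def accepts (M : TwoNA n d) (u : Fin n → Bool) : Prop :=
  ∃ p : ℕ, Relation.ReflTransGen (M.stepRel u) (M.start, 0) (M.acc, p)

/-- A `2NA_n` computes `f` if it accepts exactly the inputs `u` with `f u = true`. -/
def Computes (M : TwoNA n d) (f : (Fin n → Bool) → Bool) : Prop :=
  ∀ u, M.accepts u ↔ f u = true

def ComputesShuffled (M : TwoNA n d) (f : (Fin n → Bool) → Bool) : Prop :=
  ∃ θ : Equiv.Perm (Fin n), M.Computes (fun v => f (fun j => v (θ j)))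

end TwoNA

/-- The probabilistic counterpart `2PA_n`: every transition carries a probability, and
from each non-halting configuration the outgoing probabilities sum to `1`. -/
structure TwoPA (n d : ℕ) where
  start : Fin d
  acc : Fin d
  rej : Fin d
  acc_ne_rej : acc ≠ rej
  δ : ℕ → Fin d → Bool → Fin d × Dir → ENNReal
  sum_one : ∀ i s b, ∑ r : Fin d × Dir, δ i s b r = 1
  noLeft : ∀ s b r, δ 0 s b r ≠ 0 → r.2 ≠ Dir.L
  noRight : ∀ s b r, δ (n - 1) s b r ≠ 0 → r.2 ≠ Dir.R
  haltRight : ∀ i s b r, i < n → i ≠ n - 1 → δ i s b r ≠ 0 → r.1 ≠ acc ∧ r.1 ≠ rej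

namespace TwoPA

variable {n d : ℕ}

/-- One-step transition probability of the Markov chain on configurations
(halting configurations are absorbing). -/
noncomputable def transP (M : TwoPA n d) (u : Fin n → Bool) (c c' : Fin d × ℕ) : ENNReal :=
  if c.1 = M.acc ∨ c.1 = M.rej then (if c' = c then 1 else 0)
  else ∑ r : Fin d × Dir,
    if c' = (r.1, movePos c.2 r.2) then M.δ c.2 c.1 (readBit u c.2) r else 0

/-- Distribution over configurations after `t` steps. -/
noncomputable def dist (M : TwoPA n d) (u : Fin n → Bool) : ℕ → (Fin d × ℕ) → ENNReal
  | 0 => fun c => if c = (M.start, 0) then 1 else 0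
  | t + 1 => fun c' => ∑' c : Fin d × ℕ, M.dist u t c * M.transP u c c'

/-- The probability of eventually halting in the accepting state. -/
noncomputable def accProb (M : TwoPA n d) (u : Fin n → Bool) : ENNReal :=
  ⨆ t : ℕ, ∑' p : ℕ, M.dist u t (M.acc, p)

/-- The probability of eventually halting in the rejecting state. -/
noncomputable def rejProb (M : TwoPA n d) (u : Fin n → Bool) : ENNReal :=
  ⨆ t : ℕ, ∑' p : ℕ, M.dist u t (M.rej, p)

/-- The expected running time (number of steps until halting):
`E[τ] = ∑_t P(τ > t)`. -/
noncomputable def expTime (M : TwoPA n d) (u : Fin n → Bool) : ENNReal :=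
  ∑' t : ℕ, (1 - (∑' p : ℕ, M.dist u t (M.acc, p)) - (∑' p : ℕ, M.dist u t (M.rej, p)))

/-- A `2PA_n` computes `f` with error probability `ε`:
members of `f⁻¹(1)` are accepted and members of `f⁻¹(0)` rejected
with probability at least `1/2 + ε`. -/
def Computes (M : TwoPA n d) (f : (Fin n → Bool) → Bool) (ε : ℝ) : Prop :=
  ∀ u, (f u = true → ENNReal.ofReal (1 / 2 + ε) ≤ M.accProb u) ∧
       (f u = false → ENNReal.ofReal (1 / 2 + ε) ≤ M.rejProb u)

def ComputesShuffled (M : TwoPA n d) (f : (Fin n → Bool) → Bool) (ε : ℝ) : Prop :=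
  ∃ θ : Equiv.Perm (Fin n), M.Computes (fun v => f (fun j => v (θ j))) ε

end TwoPA

/-! ## Subfunctions and the complexity measure `N(f)` -/

/-- Assemble a full input from: a permutation `θ` (so that the variable at the `k`-th
position of the order is `x_{θ(k)}`), an assignment `ρ` to the first `i` variables of
the order, and values `γ` for the remaining `n - i` variables. -/
def assembleInput {n : ℕ} (θ : Equiv.Perm (Fin n)) (i : ℕ) (ρ : Fin i → Bool)
    (γ : Fin (n - i) → Bool) : Fin n → Bool := fun j =>
  if h : (θ.symm j : ℕ) < i then ρ ⟨(θ.symm j : ℕ), h⟩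
  else γ ⟨(θ.symm j : ℕ) - i, by have := (θ.symm j).isLt; omega⟩

/-- `N_i^θ(f)`: the number of distinct subfunctions of `f` obtained by fixing the first
`i` variables (in the order given by `θ`). -/
noncomputable def subfunCount (n : ℕ) (f : (Fin n → Bool) → Bool)
    (θ : Equiv.Perm (Fin n)) (i : ℕ) : ℕ :=
  Set.ncard { g : (Fin (n - i) → Bool) → Bool |
    ∃ ρ : Fin i → Bool, g = fun γ => f (assembleInput θ i ρ γ) }

/-- `N^θ(f) = max_{1 ≤ i ≤ n-1} N_i^θ(f)`. -/
noncomputable def Nperm (n : ℕ) (f : (Fin n → Bool) → Bool) (θ : Equiv.Perm (Fin n)) : ℕ :=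
  (Finset.Icc 1 (n - 1)).sup (subfunCount n f θ)

/-- `N(f) = min_θ N^θ(f)`. -/
noncomputable def Nsub (n : ℕ) (f : (Fin n → Bool) → Bool) : ℕ :=
  ⨅ θ : Equiv.Perm (Fin n), Nperm n f θ

/-! ## Languages: the measure `R_n(L)` -/

/-- `R^r(L_n)`: the number of equivalence classes of strings of length `r`, where
`u ∼ v` iff `u·y ∈ L ↔ v·y ∈ L` for all `y` of length `n - r`; counted as the number
of distinct "extension behaviours". -/
noncomputable def Rr (L : Set (List Bool)) (n r : ℕ) : ℕ :=
  Set.ncard { g : { y : List Bool // y.length = n - r } → Prop |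
    ∃ u : List Bool, u.length = r ∧ g = fun y => (u ++ y.1) ∈ L }

/-- `R_n(L) = max_{1 ≤ r ≤ n-1} R^r(L_n)`. -/
noncomputable def Rn (L : Set (List Bool)) (n : ℕ) : ℕ :=
  (Finset.Icc 1 (n - 1)).sup (Rr L n)

/-! ## Uniform two-way automata (2DFA / 2NFA) -/

/-- Tape alphabet of a uniform two-way automaton: end-markers and input bits. -/
inductive TapeSym : Type
  | lend | rend | bit (b : Bool)
  deriving DecidableEq

/-- The tape of input `w` between end-markers: square `0` holds `⊢`, squares
`1, …, |w|` hold the input, square `|w|+1` holds `⊣`. -/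
def tapeSym (w : List Bool) (p : ℕ) : TapeSym :=
  if p = 0 then TapeSym.lend
  else if h : p - 1 < w.length then TapeSym.bit (w.get ⟨p - 1, h⟩) else TapeSym.rend

/-- A uniform two-way deterministic finite automaton (2DFA) with `d` states. -/
structure TwoDFA (d : ℕ) where
  start : Fin d
  acc : Fin d
  rej : Fin d
  acc_ne_rej : acc ≠ rej
  δ : Fin d → TapeSym → Fin d × Dir

namespace TwoDFA

variable {d : ℕ}

def step (M : TwoDFA d) (w : List Bool) (c : Fin d × ℕ) : Fin d × ℕ :=
  if c.1 = M.acc ∨ c.1 = M.rej then c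
  else ((M.δ c.1 (tapeSym w c.2)).1, movePos c.2 (M.δ c.1 (tapeSym w c.2)).2)

def accepts (M : TwoDFA d) (w : List Bool) : Prop :=
  ∃ t : ℕ, ((M.step w)^[t] (M.start, 0)).1 = M.acc

def rejects (M : TwoDFA d) (w : List Bool) : Prop :=
  ∃ t : ℕ, ((M.step w)^[t] (M.start, 0)).1 = M.rej

/-- A 2DFA recognizes `L` if it accepts every member and rejects every non-member. -/
def Recognizes (M : TwoDFA d) (L : Set (List Bool)) : Prop :=
  ∀ w, (w ∈ L → M.accepts w) ∧ (w ∉ L → M.rejects w)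

end TwoDFA

/-- A uniform two-way nondeterministic finite automaton (2NFA) with `d` states. -/
structure TwoNFA (d : ℕ) where
  start : Fin d
  acc : Fin d
  rej : Fin d
  acc_ne_rej : acc ≠ rej
  δ : Fin d → TapeSym → Set (Fin d × Dir)

namespace TwoNFA

variable {d : ℕ}

def stepRel (M : TwoNFA d) (w : List Bool) (c c' : Fin d × ℕ) : Prop :=
  c.1 ≠ M.acc ∧ c.1 ≠ M.rej ∧
    ∃ r ∈ M.δ c.1 (tapeSym w c.2), c' = (r.1, movePos c.2 r.2)

def accepts (M : TwoNFA d) (w : List Bool) : Prop :=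
  ∃ p : ℕ, Relation.ReflTransGen (M.stepRel w) (M.start, 0) (M.acc, p)

/-- A 2NFA recognizes `L` if it accepts exactly the members of `L`. -/
def Recognizes (M : TwoNFA d) (L : Set (List Bool)) : Prop :=
  ∀ w, M.accepts w ↔ w ∈ L

end TwoNFA

/-! ## Size classes -/

/-- A family of Boolean functions, one for each input length. -/
abbrev BoolFamily : Type := (n : ℕ) → (Fin n → Bool) → Bool

/-- `2DSIZE(d(n))`. -/
def DSIZE (df : ℕ → ℕ) : Set BoolFamily :=
  { f | ∀ n, ∃ dn ≤ df n, ∃ M : TwoDA n dn, M.Computes (f n) }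

/-- `2DΘSIZE(d(n))`. -/
def DSIZEΘ (df : ℕ → ℕ) : Set BoolFamily :=
  { f | ∀ n, ∃ dn ≤ df n, ∃ M : TwoDA n dn, M.ComputesShuffled (f n) }

/-- `2NSIZE(d(n))`. -/
def NSIZE (df : ℕ → ℕ) : Set BoolFamily :=
  { f | ∀ n, ∃ dn ≤ df n, ∃ M : TwoNA n dn, M.Computes (f n) }

/-- `2NΘSIZE(d(n))`. -/
def NSIZEΘ (df : ℕ → ℕ) : Set BoolFamily :=
  { f | ∀ n, ∃ dn ≤ df n, ∃ M : TwoNA n dn, M.ComputesShuffled (f n) }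

/-- `2PSIZE(d(n))`, with error bound `ε` and expected running time at most `T` on
every input. -/
def PSIZE (df : ℕ → ℕ) (ε T : ℝ) : Set BoolFamily :=
  { f | ∀ n, ∃ dn ≤ df n, ∃ M : TwoPA n dn,
      M.Computes (f n) ε ∧ ∀ u, M.expTime u ≤ ENNReal.ofReal T }

/-- `2PΘSIZE(d(n))`, with error bound `ε` and expected running time at most `T` on
every input. -/
def PSIZEΘ (df : ℕ → ℕ) (ε T : ℝ) : Set BoolFamily :=
  { f | ∀ n, ∃ dn ≤ df n, ∃ M : TwoPA n dn,
      M.ComputesShuffled (f n) ε ∧ ∀ u, M.expTime u ≤ ENNReal.ofReal T }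

/-- `2DFASIZE(d(n))`: for each length `n`, a 2DFA with at most `d(n)` states decides
membership of the length-`n` strings. -/
def DFASIZE (df : ℕ → ℕ) : Set (Set (List Bool)) :=
  { L | ∀ n, ∃ dn ≤ df n, ∃ M : TwoDFA dn,
      ∀ w : List Bool, w.length = n → ((w ∈ L → M.accepts w) ∧ (w ∉ L → M.rejects w)) }

/-- `2NFASIZE(d(n))`. -/
def NFASIZE (df : ℕ → ℕ) : Set (Set (List Bool)) :=
  { L | ∀ n, ∃ dn ≤ df n, ∃ M : TwoNFA dn,
      ∀ w : List Bool, w.length = n → (M.accepts w ↔ w ∈ L) }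
/-! ## The shuffled address function `2-SAF_t` and its uniform version -/

namespace SAF

/-- Number of variables in each of the `2t` blocks. -/
def q (n t : ℕ) : ℕ := n / (2 * t)

/-- Number of address variables per block: `⌈log₂ 2t⌉`. -/
def c (t : ℕ) : ℕ := Nat.clog 2 (2 * t)

/-- Number of value variables per block. -/
def b (n t : ℕ) : ℕ := q n t - c t

/-- Given the per-block address function `Adr` and per-block value function `BVal`,
`Ind` finds the minimal block whose address is `a`, and `mkVal a` is the value of
that block (or `none` if no block has address `a`). -/
def mkVal (t : ℕ) (Adr BVal : ℕ → ℕ) (a : ℕ) : Option ℕ :=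
  ((List.range (2 * t)).find? (fun p => Adr p == a)).map BVal

/-- The two-round iteration of the address function:
`Step_2(X,-1) = 2`; `Step_1(X,i) = Val(X, Step_2(X,i-1)) + t`;
`Step_2(X,i) = Val(X, Step_1(X,i))`; result `1` iff `Step_2(X,1) > 0`
(`none`, representing `-1`, gives result `0`). -/
def iterate (t : ℕ) (Val : ℕ → Option ℕ) : Bool :=
  match ((((Val 2).map (· + t)).bind Val).bind (fun a => (Val a).map (· + t))).bind Val with
  | some v => decide (0 < v)
  | none => false

/-- `Adr(X,p) = (∑_{j<c} y^p_j 2^j) mod 2t`, where the address variables of block `p`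
are the first `c` variables of the block. -/
def Adr (n t : ℕ) (X : Fin n → Bool) (p : ℕ) : ℕ :=
  (∑ j ∈ Finset.range (c t), (if readBit X (p * q n t + j) then 2 ^ j else 0)) % (2 * t)

/-- The value of block `p`: the number of `1`s among its value variables, mod `t`. -/
def blockVal (n t : ℕ) (X : Fin n → Bool) (p : ℕ) : ℕ :=
  (∑ j ∈ Finset.range (b n t), (if readBit X (p * q n t + c t + j) then 1 else 0)) % t

/-- `Val(X,a)`: value of the first block with address `a` (`none` meaning `-1`). -/
def Val (n t : ℕ) (X : Fin n → Bool) : ℕ → Option ℕ :=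
  mkVal t (Adr n t X) (blockVal n t X)

end SAF

/-- The Boolean function `2-SAF_t` on `n` variables. -/
def SAFfun (n t : ℕ) (X : Fin n → Bool) : Bool :=
  SAF.iterate t (SAF.Val n t X)

/-- The set of value variables of block `p` (for the `2-SAF_t` layout) inside a set
`A` of variables. -/
def SAF.valueVarsIn (n t : ℕ) (p : ℕ) (A : Finset (Fin n)) : Finset (Fin n) :=
  A.filter (fun x => p * q n t + c t ≤ (x : ℕ) ∧ (x : ℕ) < p * q n t + q n t)

/-- The blocks from which `A` contains at least `t` value variables. -/
def SAF.heavyBlocks (n t : ℕ) (A : Finset (Fin n)) : Finset ℕ :=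
  (Finset.range (2 * t)).filter (fun p => t ≤ (valueVarsIn n t p A).card)

namespace USAF

/-- The data (non-mark) bits of block `p`, as (mark, data) pairs: within a block the
variables in odd (1-based) positions are mark bits, each followed by a data bit. -/
def dataPairs (n t : ℕ) (X : Fin n → Bool) (p : ℕ) : List (Bool × Bool) :=
  (List.range (SAF.q n t / 2)).map
    (fun j => (readBit X (p * SAF.q n t + 2 * j), readBit X (p * SAF.q n t + 2 * j + 1)))

/-- The address bits of block `p`: data bits whose mark bit is `0`, in order. -/
def addrBits (n t : ℕ) (X : Fin n → Bool) (p : ℕ) : List Bool :=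
  ((dataPairs n t X p).filter (fun pr => pr.1 == false)).map Prod.snd

/-- The value bits of block `p`: data bits whose mark bit is `1`, in order. -/
def valBits (n t : ℕ) (X : Fin n → Bool) (p : ℕ) : List Bool :=
  ((dataPairs n t X p).filter (fun pr => pr.1 == true)).map Prod.snd

/-- `Adr(X,p) = (∑_{j<c} y^p_j 2^{c-j-1}) mod 2t`, over the first `c` address bits. -/
def Adr (n t : ℕ) (X : Fin n → Bool) (p : ℕ) : ℕ :=
  (∑ j ∈ Finset.range (SAF.c t),
      (if (addrBits n t X p).getD j false then 2 ^ (SAF.c t - j - 1) else 0)) % (2 * t)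

/-- The value of block `p`: the number of `1`s among its value bits, mod `t`. -/
def blockVal (n t : ℕ) (X : Fin n → Bool) (p : ℕ) : ℕ :=
  ((valBits n t X p).count true) % t

def Val (n t : ℕ) (X : Fin n → Bool) : ℕ → Option ℕ :=
  SAF.mkVal t (Adr n t X) (blockVal n t X)

end USAF

/-- The Boolean function `2-USAF_t` on `n` variables. -/
def USAFfun (n t : ℕ) (X : Fin n → Bool) : Bool :=
  SAF.iterate t (USAF.Val n t X)

/-- The language `2-USAF-L_t`: all binary strings `u` with `2-USAF_t(u) = 1`. -/
def USAFlang (t : ℕ) : Set (List Bool) :=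
  { w : List Bool | USAFfun w.length t (fun i => w.get i) = true }

/-! ## The equality function -/

/-- `EQ(X) = 1` iff `x_i = x_{i + ⌊n/2⌋}` for every `0 ≤ i < ⌊n/2⌋`. -/
def EQfun (n : ℕ) (x : Fin n → Bool) : Bool :=
  decide (∀ i : ℕ, (h : i < n / 2) → x ⟨i, by omega⟩ = x ⟨i + n / 2, by omega⟩)

/-! A two-way automaton crosses the boundary between a prefix `u` and the rest of the
input only finitely often, and all it can carry across is its state. So the effect of `u`
on acceptance is captured by its crossing table: for each way of entering the prefix
(the start, or coming back from the right in state `s`), the set of ways of leaving it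
(accepting inside it, or moving right in state `s'`). Two prefixes of the same length with
the same table have the same extensions in `L`, by pasting the crossing segments of one
accepting run into the other; the table is a subset of a set with `(d + 1) ^ 2` elements. -/

theorem Set.ncard_range_le_of_factorsThrough {α β γ : Type*} [Finite β] {f : α → β}
    {g : α → γ} (h : g.FactorsThrough f) : (Set.range g).ncard ≤ Nat.card β := by
  rcases isEmpty_or_nonempty α with hα | ⟨⟨a⟩⟩
  · simp [Set.range_eq_empty]
  let e := Function.extend f g fun _ => g a
  have hg : g = e ∘ f := funext fun x => (h.extend_apply (fun _ => g a) x).symm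
  calc (Set.range g).ncard ≤ (Set.range e).ncard := by
        rw [hg]
        exact Set.ncard_le_ncard (Set.range_comp_subset_range f e) (Set.finite_range e)
    _ ≤ Nat.card β := by
        rw [← Nat.card_coe_set_eq]
        exact Finite.card_range_le _

namespace TwoNFA

open Relation

variable {d : ℕ} (M : TwoNFA d)

theorem tapeSym_append_of_le (u y : List Bool) {p : ℕ} (hp : p ≤ u.length) :
    tapeSym (u ++ y) p = tapeSym u p := by
  unfold tapeSym
  split_ifs <;> simp_all [List.getElem_append_left]
  all_goals omega

theorem tapeSym_append_eq_of_length_lt {u v : List Bool} (y : List Bool)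
    (hlen : u.length = v.length) {p : ℕ} (hp : u.length < p) :
    tapeSym (u ++ y) p = tapeSym (v ++ y) p := by
  unfold tapeSym
  rw [if_neg (by omega), if_neg (by omega)]
  by_cases h : p - 1 < (u ++ y).length
  · rw [dif_pos h, dif_pos (by simp_all)]
    simp only [List.get_eq_getElem]
    rw [List.getElem_append_right (by omega), List.getElem_append_right (by omega)]
    simp only [hlen]
  · rw [dif_neg h, dif_neg (by simp_all)]

variable {M}

theorem stepRel_of_tapeSym_eq {w w' : List Bool} {c c' : Fin d × ℕ}
    (h : tapeSym w c.2 = tapeSym w' c.2) (hs : M.stepRel w c c') : M.stepRel w' c c' := by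
  obtain ⟨hacc, hrej, r, hr, rfl⟩ := hs
  exact ⟨hacc, hrej, r, h ▸ hr, rfl⟩

theorem stepRel_pos_le_succ {w : List Bool} {c c' : Fin d × ℕ} (hs : M.stepRel w c c') :
    c'.2 ≤ c.2 + 1 ∧ c.2 ≤ c'.2 + 1 := by
  obtain ⟨-, -, r, -, rfl⟩ := hs
  cases r.2 <;> simp only [movePos] <;> omega

variable (M)

def AcceptsFrom (w : List Bool) (c : Fin d × ℕ) : Prop :=
  ∃ p, ReflTransGen (M.stepRel w) c (M.acc, p)

def leftStepRel (w : List Bool) (r : ℕ) (c c' : Fin d × ℕ) : Prop :=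
  M.stepRel w c c' ∧ c.2 ≤ r

def entryConf (r : ℕ) : Option (Fin d) → Fin d × ℕ
  | none => (M.start, 0)
  | some s => (s, r)

def IsExit (r : ℕ) : Option (Fin d) → Fin d × ℕ → Prop
  | none, c => c.1 = M.acc ∧ c.2 ≤ r
  | some s, c => c = (s, r + 1)

/-- Squares `0, …, u.length` carry `⊢ u`. Entry `none` is the start and `some s` is state
`s` on the last square of `u`; exit `none` is acceptance within `u` and `some s` is state
`s` on the first square after `u`. -/
def crossTable (u : List Bool) : Set (Option (Fin d) × Option (Fin d)) :=
  {eo | ∃ c, M.IsExit u.length eo.2 c ∧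
    ReflTransGen (M.leftStepRel u u.length) (M.entryConf u.length eo.1) c}

variable {M}

theorem reflTransGen_stepRel_append_of_leftStepRel {v : List Bool} (y : List Bool)
    {c c' : Fin d × ℕ} (h : ReflTransGen (M.leftStepRel v v.length) c c') :
    ReflTransGen (M.stepRel (v ++ y)) c c' :=
  ReflTransGen.mono
    (fun _ _ ⟨hs, hle⟩ => stepRel_of_tapeSym_eq (tapeSym_append_of_le v y hle).symm hs) _ _ h

theorem exists_run_of_mem_crossTable {v : List Bool} (y : List Bool)
    {eo : Option (Fin d) × Option (Fin d)} (h : eo ∈ M.crossTable v) :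
    ∃ c, M.IsExit v.length eo.2 c ∧
      ReflTransGen (M.stepRel (v ++ y)) (M.entryConf v.length eo.1) c :=
  let ⟨c, hexit, hrun⟩ := h
  ⟨c, hexit, reflTransGen_stepRel_append_of_leftStepRel y hrun⟩

theorem acceptsFrom_append_of_crossTable_subset {u v : List Bool} (y : List Bool)
    (hlen : u.length = v.length) (htab : M.crossTable u ⊆ M.crossTable v)
    {c : Fin d × ℕ} (hc : M.AcceptsFrom (u ++ y) c) :
    (u.length < c.2 → M.AcceptsFrom (v ++ y) c) ∧
    (∀ e, c.2 ≤ u.length → ReflTransGen (M.leftStepRel u u.length) (M.entryConf u.length e) c →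
      M.AcceptsFrom (v ++ y) (M.entryConf u.length e)) := by
  obtain ⟨p, hrun⟩ := hc
  -- Both halves go along the run together: the run hands over from the first to the second
  -- when it re-enters `u`, and back when it leaves `u` (read off the table of `v`).
  induction hrun using ReflTransGen.head_induction_on with
  | refl =>
    refine ⟨fun _ => ⟨p, .refl⟩, fun e hle hleft => ?_⟩
    obtain ⟨c, ⟨hacc, -⟩, hrun⟩ :=
      exists_run_of_mem_crossTable y (htab (show (e, none) ∈ M.crossTable u from
        ⟨(M.acc, p), ⟨rfl, hle⟩, hleft⟩))
    exact ⟨c.2, hlen ▸ hacc ▸ hrun⟩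
  | @head a c hstep _ ih =>
    have hpos := stepRel_pos_le_succ hstep
    constructor
    · intro hright
      have hstep' := stepRel_of_tapeSym_eq (tapeSym_append_eq_of_length_lt y hlen hright) hstep
      obtain ⟨p', hrun'⟩ : M.AcceptsFrom (v ++ y) c := by
        by_cases hc : u.length < c.2
        · exact ih.1 hc
        · have hentry : M.entryConf u.length (some c.1) = c :=
            Prod.ext rfl (by simp only [entryConf]; omega)
          simpa only [hentry] using ih.2 (some c.1) (by omega) (hentry ▸ ReflTransGen.refl)
      exact ⟨p', hrun'.head hstep'⟩
    · intro e hle hleft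
      have hleft' := hleft.tail ⟨stepRel_of_tapeSym_eq (tapeSym_append_of_le u y hle) hstep, hle⟩
      by_cases hc : c.2 ≤ u.length
      · exact ih.2 e hc hleft'
      · have hexit : M.IsExit u.length (some c.1) c := Prod.ext rfl (by simp; omega)
        obtain ⟨c', rfl, hcross⟩ := exists_run_of_mem_crossTable y
          (htab (show (e, some c.1) ∈ M.crossTable u from ⟨c, hexit, hleft'⟩))
        obtain ⟨p', hrun'⟩ := ih.1 (by omega)
        rw [hlen] at hexit ⊢
        exact ⟨p', hcross.trans (hexit ▸ hrun')⟩

theorem accepts_append_of_crossTable_subset {u v : List Bool} (y : List Bool)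
    (hlen : u.length = v.length) (htab : M.crossTable u ⊆ M.crossTable v)
    (h : M.accepts (u ++ y)) : M.accepts (v ++ y) :=
  (acceptsFrom_append_of_crossTable_subset y hlen htab h).2 none (Nat.zero_le _) .refl

theorem Recognizes.mem_append_iff_of_crossTable_eq {L : Set (List Bool)} (hM : M.Recognizes L)
    {u v : List Bool} (y : List Bool) (hlen : u.length = v.length)
    (htab : M.crossTable u = M.crossTable v) : u ++ y ∈ L ↔ v ++ y ∈ L := by
  rw [← hM, ← hM]
  exact ⟨accepts_append_of_crossTable_subset y hlen htab.le,
    accepts_append_of_crossTable_subset y hlen.symm htab.ge⟩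

theorem Recognizes.Rr_le {L : Set (List Bool)} (hM : M.Recognizes L) (n r : ℕ) :
    Rr L n r ≤ 2 ^ ((d + 1) ^ 2) := by
  let extensions (u : {u : List Bool // u.length = r})
      (y : {y : List Bool // y.length = n - r}) : Prop := u.1 ++ y.1 ∈ L
  have hclasses : {g | ∃ u : List Bool, u.length = r ∧ g = fun y => (u ++ y.1) ∈ L} =
      Set.range extensions := by
    ext g
    simp only [Set.mem_ofPred_eq, Set.mem_range, Subtype.exists, extensions]
    grind
  calc Rr L n r = (Set.range extensions).ncard := by rw [Rr, hclasses]
    _ ≤ Nat.card (Set (Option (Fin d) × Option (Fin d))) :=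
      Set.ncard_range_le_of_factorsThrough (f := fun u => M.crossTable u.1)
        fun u v htab => funext fun y =>
          propext (hM.mem_append_iff_of_crossTable_eq y (u.2.trans v.2.symm) htab)
    _ = 2 ^ ((d + 1) ^ 2) := by
      simp [Nat.card_eq_fintype_card, Fintype.card_set, sq]

end TwoNFA

theorem stmt3 (d : ℕ) (L : Set (List Bool)) (M : TwoNFA d) (hM : M.Recognizes L) :
    ∀ n : ℕ, Rn L n ≤ 2 ^ ((d + 1) ^ 2) :=
  fun n => Finset.sup_le fun r _ => hM.Rr_le n r
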